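/- arXiv:1905.11380 — 7 statements merged into one kernel-verified Lean document; each statement's English description precedes it below -/
import Mathlib

section
/- If n and m are both even with 3 ≤ n ≤ m−2, then for every red/blue coloring of the edges of K_{n+m−1} there is a red copy of the star K_{1,n} or a blue copy of K_{1,m}+e (a star with m edges plus an edge joining two leaves). -/
open SimpleGraph

/-- `Contains G H` : the graph `G` contains a copy of `H`. -/
def Contains {V W : Type*} (G : SimpleGraph V) (H : SimpleGraph W) : Prop :=
  ∃ f : W → V, Function.Injective f ∧ ∀ a b, H.Adj a b → G.Adj (f a) (f b)

/-- The star `K_{1,n}` on `n+1` vertices: vertex `0` is joined to all others. -/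
def starG (n : ℕ) : SimpleGraph (Fin (n + 1)) :=
  SimpleGraph.fromRel (fun a _ => a = 0)

/-- `K_{1,m}+e` on `m+1` vertices: vertex `0` joined to all others, plus the edge `{1,2}`. -/
def starPlusE (m : ℕ) : SimpleGraph (Fin (m + 1)) :=
  SimpleGraph.fromRel (fun a b => a = 0 ∨ (a = 1 ∧ b = 2))

/-!
If no vertex has red degree `n`, all red degrees are at most `n - 1`; since `n + m - 1` and
`n - 1` are odd, the handshake lemma forbids an `(n - 1)`-regular red graph, so some vertex `v`
has red degree at most `n - 2`, i.e. blue degree at least `m`. Among `m` blue neighbours of `v`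
there is a blue edge, which completes a blue `K_{1,m}+e`: otherwise they span a red clique and
any one of them has red degree at least `m - 1 > n`.
-/

section

variable {V : Type*}

theorem Finset.exists_injective_mem_of_le_card (s : Finset V) {k : ℕ} (hk : k ≤ s.card) :
    ∃ f : Fin k → V, Function.Injective f ∧ ∀ i, f i ∈ s :=
  ⟨fun i => s.equivFin.symm (Fin.castLE hk i),
    Subtype.val_injective.comp (s.equivFin.symm.injective.comp (Fin.castLE_injective hk)),
    fun _ => (s.equivFin.symm _).2⟩

theorem Finset.exists_injective_mem_starting_with [DecidableEq V] {s : Finset V} {x y : V}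
    (hx : x ∈ s) (hy : y ∈ s) (hxy : x ≠ y) {k : ℕ} (hk : k + 2 ≤ s.card) :
    ∃ f : Fin (k + 2) → V, Function.Injective f ∧ f 0 = x ∧ f 1 = y ∧ ∀ i, f i ∈ s := by
  have hcard : k ≤ ((s.erase x).erase y).card := by
    rw [Finset.card_erase_of_mem (Finset.mem_erase.2 ⟨hxy.symm, hy⟩),
      Finset.card_erase_of_mem hx]
    omega
  obtain ⟨g, hg, hgs⟩ := ((s.erase x).erase y).exists_injective_mem_of_le_card hcard
  refine ⟨Fin.cons x (Fin.cons y g), ?_, rfl, rfl, ?_⟩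
  · refine Fin.cons_injective_iff.2 ⟨?_, Fin.cons_injective_iff.2 ⟨?_, hg⟩⟩
    · rintro ⟨i, hi⟩
      cases i using Fin.cases with
      | zero => exact hxy hi.symm
      | succ i =>
        rw [Fin.cons_succ] at hi
        simpa [hi] using hgs i
    · rintro ⟨i, hi⟩
      simpa [hi] using hgs i
  · intro i
    cases i using Fin.cases with
    | zero => exact hx
    | succ i =>
      cases i using Fin.cases with
      | zero => exact hy
      | succ i => exact Finset.mem_of_mem_erase (Finset.mem_of_mem_erase (hgs i))

namespace SimpleGraph

variable (G : SimpleGraph V)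

theorem injective_cons_of_forall_adj {v : V} {k : ℕ} {f : Fin k → V}
    (hf : Function.Injective f) (hv : ∀ i, G.Adj v (f i)) :
    Function.Injective (Fin.cons v f : Fin (k + 1) → V) :=
  Fin.cons_injective_iff.2 ⟨fun ⟨i, hi⟩ => (hv i).ne hi.symm, hf⟩

theorem contains_starG_of_forall_adj {v : V} {n : ℕ} {f : Fin n → V}
    (hf : Function.Injective f) (hv : ∀ i, G.Adj v (f i)) : Contains G (starG n) := by
  refine ⟨Fin.cons v f, G.injective_cons_of_forall_adj hf hv, fun a b hab => ?_⟩
  obtain ⟨hne, rfl | rfl⟩ := (fromRel_adj _ a b).1 hab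
  · cases b using Fin.cases with
    | zero => exact absurd rfl hne
    | succ j => exact hv j
  · cases a using Fin.cases with
    | zero => exact absurd rfl hne
    | succ j => exact (hv j).symm

theorem contains_starPlusE_of_forall_adj {v : V} {m : ℕ} {f : Fin (m + 2) → V}
    (hf : Function.Injective f) (hv : ∀ i, G.Adj v (f i)) (h01 : G.Adj (f 0) (f 1)) :
    Contains G (starPlusE (m + 2)) := by
  refine ⟨Fin.cons v f, G.injective_cons_of_forall_adj hf hv, fun a b hab => ?_⟩
  obtain ⟨hne, (rfl | ⟨rfl, rfl⟩) | (rfl | ⟨rfl, rfl⟩)⟩ := (fromRel_adj _ a b).1 hab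
  · cases b using Fin.cases with
    | zero => exact absurd rfl hne
    | succ j => exact hv j
  · exact h01
  · cases a using Fin.cases with
    | zero => exact absurd rfl hne
    | succ j => exact (hv j).symm
  · exact h01.symm

theorem contains_starG_of_le_degree {v : V} [Fintype (G.neighborSet v)] {n : ℕ}
    (h : n ≤ G.degree v) : Contains G (starG n) := by
  obtain ⟨f, hf, hfv⟩ := (G.neighborFinset v).exists_injective_mem_of_le_card h
  exact G.contains_starG_of_forall_adj hf fun i => (G.mem_neighborFinset v _).1 (hfv i)

theorem exists_degree_lt_of_odd_card [Fintype V] [DecidableRel G.Adj] {d : ℕ}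
    (hV : Odd (Fintype.card V)) (hd : Odd d) (h : ∀ v, G.degree v ≤ d) :
    ∃ v, G.degree v < d := by
  by_contra! hge
  have hodd : ∀ v, Odd (G.degree v) := fun v => le_antisymm (h v) (hge v) ▸ hd
  have := G.even_card_odd_degree_vertices
  rw [Finset.filter_true_of_mem fun v _ => hodd v, Finset.card_univ] at this
  exact Nat.not_even_iff_odd.2 hV this

end SimpleGraph

end

theorem stmt_0 (n m : ℕ) (hne : Even n) (hme : Even m) (hn : 3 ≤ n) (hnm : n + 2 ≤ m)
    (R : SimpleGraph (Fin (n + m - 1))) :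
    Contains R (starG n) ∨ Contains Rᶜ (starPlusE m) := by
  classical
  refine or_iff_not_imp_left.2 fun hred => ?_
  have hdeg : ∀ v, R.degree v < n := fun v =>
    lt_of_not_ge fun h => hred (R.contains_starG_of_le_degree h)
  obtain ⟨v, hv⟩ := R.exists_degree_lt_of_odd_card
    (by rw [Fintype.card_fin]; exact Nat.Even.sub_odd (by omega) (hne.add hme) odd_one)
    (Nat.Even.sub_odd (by omega) hne odd_one) (fun v => Nat.le_sub_one_of_lt (hdeg v))
  set s := Rᶜ.neighborFinset v
  have hs : m ≤ s.card := by
    rw [card_neighborFinset_eq_degree, R.degree_compl, Fintype.card_fin]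
    omega
  obtain ⟨x, hx, y, hy, hxy⟩ : ∃ x ∈ s, ∃ y ∈ s, Rᶜ.Adj x y := by
    by_contra! hblue
    obtain ⟨x, hx⟩ := Finset.card_pos.1 (by omega : 0 < s.card)
    have hsub : s.erase x ⊆ R.neighborFinset x := fun u hu => by
      obtain ⟨hux, hu⟩ := Finset.mem_erase.1 hu
      simpa [hux.symm] using hblue x hx u hu
    have := (Finset.card_le_card hsub).trans_lt (hdeg x)
    rw [Finset.card_erase_of_mem hx] at this
    omega
  obtain ⟨k, rfl⟩ : ∃ k, m = k + 2 := ⟨m - 2, by omega⟩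
  obtain ⟨f, hf, rfl, rfl, hfs⟩ :=
    Finset.exists_injective_mem_starting_with hx hy hxy.ne (by omega : k + 2 ≤ s.card)
  exact Rᶜ.contains_starPlusE_of_forall_adj hf
    (fun i => (Rᶜ.mem_neighborFinset v _).1 (hfs i)) hxy
end

section
/- If n and m are both even with 3 ≤ n ≤ m−2, then there exists a red/blue coloring of the edges of K_{n+m−2} containing no red K_{1,n} and no blue K_{1,m}+e. -/
/-!
Colour red the edges of an `(n - 2)`-regular graph on `n + m - 2` vertices; since `n - 2` is even,
the circulant graph joining `i` and `j` whenever `i - j ≡ ±1, …, ±(n - 2) / 2` modulo `n + m - 2`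
will do. Every red degree is `n - 2 < n` and every blue degree is
`(n + m - 3) - (n - 2) = m - 1 < m`, whereas a copy of `K_{1,n}` (resp. `K_{1,m}+e`) needs a
vertex of degree `n` (resp. `m`).
-/

open SimpleGraph

open Finset
open scoped Pointwise

theorem contains_iff_isContained {V W : Type*} {G : SimpleGraph V} {H : SimpleGraph W} :
    Contains G H ↔ H ⊑ G :=
  ⟨fun ⟨f, hf, hadj⟩ => ⟨⟨⟨f, hadj _ _⟩, hf⟩⟩,
    fun ⟨c⟩ => ⟨c, c.injective, fun _ _ => c.toHom.map_adj⟩⟩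

theorem not_contains_of_isRegularOfDegree {V W : Type*} [Fintype V] [Fintype W]
    {G : SimpleGraph V} [DecidableRel G.Adj] {H : SimpleGraph W} [DecidableRel H.Adj] {d : ℕ}
    (hG : G.IsRegularOfDegree d) (w : W) (hd : d < H.degree w) : ¬ Contains G H := by
  intro h
  obtain ⟨c⟩ := contains_iff_isContained.1 h
  have := c.degree_le w
  rw [hG.degree_eq] at this
  omega

theorem degree_zero_of_forall_adj_zero {k : ℕ} (H : SimpleGraph (Fin (k + 1)))
    [DecidableRel H.Adj] (h : ∀ i ≠ 0, H.Adj 0 i) : H.degree 0 = k := by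
  have : H.neighborFinset 0 = univ.erase 0 := by
    ext i
    simpa [mem_neighborFinset] using ⟨fun hi => (H.ne_of_adj hi).symm, h i⟩
  rw [← card_neighborFinset_eq_degree, this, card_erase_of_mem (mem_univ _), card_univ,
    Fintype.card_fin, Nat.add_sub_cancel]

theorem degree_starG_zero (n : ℕ) [DecidableRel (starG n).Adj] : (starG n).degree 0 = n :=
  degree_zero_of_forall_adj_zero _ fun i hi => by simp [starG, hi.symm]

theorem degree_starPlusE_zero (m : ℕ) [DecidableRel (starPlusE m).Adj] :
    (starPlusE m).degree 0 = m :=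
  degree_zero_of_forall_adj_zero _ fun i hi => by simp [starPlusE, hi.symm]

theorem circulantGraph_isRegularOfDegree {G : Type*} [AddGroup G] [Fintype G] [DecidableEq G]
    {s : Finset G} (h0 : 0 ∉ s) (hs : Disjoint s (-s)) :
    (circulantGraph (s : Set G)).IsRegularOfDegree (2 * #s) := by
  intro v
  have hnbr : (circulantGraph (s : Set G)).neighborFinset v =
      (s ∪ -s).map (Equiv.addRight v).toEmbedding := by
    ext w
    have hne : w - v ∈ s ∪ -s → v ≠ w := by
      rintro hw rfl
      simp [h0] at hw
    have hmem : w - v ∈ s ∪ -s ↔ v - w ∈ s ∨ w - v ∈ s := by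
      rw [mem_union, mem_neg', neg_sub, or_comm]
    simp only [mem_neighborFinset, circulantGraph_adj, mem_map_equiv, Equiv.addRight_symm_apply,
      ← sub_eq_add_neg, mem_coe, ← hmem]
    exact ⟨And.right, fun hw => ⟨hne hw, hw⟩⟩
  rw [← card_neighborFinset_eq_degree, hnbr, card_map, card_union_of_disjoint hs, card_neg, two_mul]

theorem exists_isRegularOfDegree_fin {N k : ℕ} (hk : 2 * k < N) :
    ∃ (G : SimpleGraph (Fin N)) (_ : DecidableRel G.Adj), G.IsRegularOfDegree (2 * k) := by
  have : NeZero N := ⟨by omega⟩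
  set s : Finset (Fin N) := (Icc 1 k).attachFin fun i hi => by rw [mem_Icc] at hi; omega
  have h0 : 0 ∉ s := by simp [s, mem_attachFin]
  have hs : Disjoint s (-s) := by
    refine disjoint_left.2 fun d hd hd' => ?_
    rw [mem_attachFin] at hd
    rw [mem_neg', mem_attachFin, Fin.val_neg] at hd'
    have hd0 : d ≠ 0 := by rintro rfl; simp at hd
    simp only [hd0, if_false, mem_Icc] at hd hd'
    omega
  refine ⟨circulantGraph (s : Set (Fin N)), inferInstance, ?_⟩
  simpa [s, card_attachFin] using circulantGraph_isRegularOfDegree h0 hs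

theorem stmt_1_general (n m : ℕ) (hne : Even n) (hn : 3 ≤ n) (hnm : n + 2 ≤ m) :
    ∃ R : SimpleGraph (Fin (n + m - 2)),
      ¬ Contains R (starG n) ∧ ¬ Contains Rᶜ (starPlusE m) := by
  classical
  obtain ⟨k, rfl⟩ : ∃ k, n = 2 * k + 2 := ⟨n / 2 - 1, by obtain ⟨p, rfl⟩ := hne; omega⟩
  obtain ⟨R, _, hR⟩ := exists_isRegularOfDegree_fin (N := 2 * k + 2 + m - 2) (k := k) (by omega)
  refine ⟨R, not_contains_of_isRegularOfDegree hR 0 ?_,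
    not_contains_of_isRegularOfDegree hR.compl 0 ?_⟩
  · rw [degree_starG_zero]
    omega
  · rw [degree_starPlusE_zero, Fintype.card_fin]
    omega

theorem stmt_1 (n m : ℕ) (hne : Even n) (hme : Even m) (hn : 3 ≤ n) (hnm : n + 2 ≤ m) :
    ∃ R : SimpleGraph (Fin (n + m - 2)),
      ¬ Contains R (starG n) ∧ ¬ Contains Rᶜ (starPlusE m) :=
  stmt_1_general n m hne hn hnm
end

section
/- If n and m are both even with 3 ≤ n ≤ m−2, then r(K_{1,n}, K_{1,m}+e) = n+m−1. -/
/-!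
Upper bound: on `n + m - 1` vertices both `n + m - 1` and `n - 1` are odd, so by the handshake
lemma some vertex `v` has red degree different from `n - 1`. If it is at least `n`, `v` centres a
red `K_{1,n}`. Otherwise `v` has blue degree at least `m`; a blue edge inside its blue
neighbourhood completes a blue `K_{1,m}+e`, and if there is none, that neighbourhood is a red
clique, so each of its vertices has red degree at least `m - 1 ≥ n`.

Lower bound: on an abelian group of order `n + m - 2`, the Cayley sum graph `a ~ b ↔ a + b ∈ S`
with `|S| = n - 1` has all degrees in `{n - 2, n - 1}`, so it has no `K_{1,n}` and its complement
has no `K_{1,m}`.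
-/

open SimpleGraph

open Finset

theorem Function.Embedding.exists_fin_zero_one_eq {α : Type*} {k : ℕ} (g : Fin (k + 2) ↪ α)
    {x y : α} (hxy : x ≠ y) : ∃ h : Fin (k + 2) ↪ α, h 0 = x ∧ h 1 = y := by
  have pair_injective : ∀ {a b : α}, a ≠ b → Function.Injective ![a, b] := by
    intro a b hab i j
    fin_cases i <;> fin_cases j <;> simp [hab, hab.symm]
  obtain ⟨σ, hσ⟩ := Equiv.Perm.exists_extending_pair ![g 0, g 1] ![x, y]
    (pair_injective (g.injective.ne Fin.zero_ne_one)) (pair_injective hxy)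
  exact ⟨g.trans σ.toEmbedding, hσ 0, hσ 1⟩

namespace Contains

variable {U V W : Type*} {G : SimpleGraph V}

theorem of_le {H H' : SimpleGraph W} (h : Contains G H) (hle : H' ≤ H) : Contains G H' :=
  let ⟨f, hf, hadj⟩ := h
  ⟨f, hf, fun _ _ hab => hadj _ _ (hle hab)⟩

theorem trans {H : SimpleGraph W} {K : SimpleGraph U} (hGH : Contains G H) (hKG : Contains K G) :
    Contains K H :=
  let ⟨f, hf, hfadj⟩ := hGH
  let ⟨g, hg, hgadj⟩ := hKG
  ⟨g ∘ f, hg.comp hf, fun _ _ hab => hgadj _ _ (hfadj _ _ hab)⟩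

theorem exists_degree_le [Fintype V] [DecidableRel G.Adj] [Fintype W]
    {H : SimpleGraph W} [DecidableRel H.Adj] (h : Contains G H) (w : W) :
    ∃ v, H.degree w ≤ G.degree v :=
  let ⟨f, hf, hadj⟩ := h
  ⟨f w, Copy.degree_le ⟨⟨f, hadj _ _⟩, hf⟩ w⟩

end Contains

theorem starG_le_starPlusE (m : ℕ) : starG m ≤ starPlusE m := by
  intro a b hab
  simp only [starG, starPlusE, fromRel_adj] at hab ⊢
  tauto

section

variable {V : Type*} {G : SimpleGraph V}

theorem contains_of_cons {n : ℕ} {H : SimpleGraph (Fin (n + 1))} {v : V}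
    (g : Fin n ↪ G.neighborSet v) (hg : ∀ i j, H.Adj i.succ j.succ → G.Adj (g i) (g j)) :
    Contains G H := by
  have hcenter : ∀ i, G.Adj v (g i) := fun i => (g i).2
  refine ⟨Fin.cons v fun i => g i, ?_, ?_⟩
  · rw [Fin.cons_injective_iff]
    exact ⟨fun ⟨i, hi⟩ => (hcenter i).ne hi.symm, Subtype.val_injective.comp g.injective⟩
  · intro a b hab
    induction a using Fin.cases with
    | zero =>
      induction b using Fin.cases with
      | zero => exact absurd hab H.irrefl
      | succ j => exact hcenter j
    | succ i =>
      induction b using Fin.cases with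
      | zero => exact (hcenter i).symm
      | succ j => exact hg i j hab

theorem contains_starG_iff [Fintype V] [DecidableRel G.Adj] {n : ℕ} :
    Contains G (starG n) ↔ ∃ v, n ≤ G.degree v := by
  classical
  constructor
  · intro h
    obtain ⟨v, hv⟩ := h.exists_degree_le 0
    refine ⟨v, le_of_eq_of_le ?_ hv⟩
    rw [show starG n = starGraph 0 from rfl]
    convert (degree_starGraph_center (r := (0 : Fin (n + 1)))).symm
    simp
  · rintro ⟨v, hv⟩
    obtain ⟨g⟩ := Function.Embedding.nonempty_of_card_le (α := Fin n) (β := G.neighborSet v)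
      (by rwa [Fintype.card_fin, card_neighborSet_eq_degree])
    refine contains_of_cons g fun i j hij => ?_
    simp [starG, Fin.succ_ne_zero] at hij

theorem contains_starPlusE_of_adj [Fintype V] [DecidableRel G.Adj] {m : ℕ} {v u w : V}
    (hm : 2 ≤ m) (hdeg : m ≤ G.degree v) (hu : G.Adj v u) (hw : G.Adj v w) (huw : G.Adj u w) :
    Contains G (starPlusE m) := by
  obtain ⟨k, rfl⟩ : ∃ k, m = k + 2 := ⟨m - 2, by omega⟩
  obtain ⟨g⟩ :=
    Function.Embedding.nonempty_of_card_le (α := Fin (k + 2)) (β := G.neighborSet v)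
    (by rwa [Fintype.card_fin, card_neighborSet_eq_degree])
  obtain ⟨h, h0, h1⟩ := g.exists_fin_zero_one_eq (x := ⟨u, hu⟩) (y := ⟨w, hw⟩)
    (Subtype.coe_ne_coe.1 huw.ne)
  refine contains_of_cons h fun i j hij => ?_
  simp only [starPlusE, fromRel_adj, Fin.succ_ne_zero, false_or, ← Fin.succ_zero_eq_one,
    ← Fin.succ_one_eq_two, Fin.succ_inj] at hij
  rcases hij.2 with ⟨rfl, rfl⟩ | ⟨rfl, rfl⟩
  · simpa [h0, h1] using huw
  · simpa [h0, h1] using huw.symm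

theorem exists_le_degree_of_contains_starPlusE [Fintype V] [DecidableRel G.Adj] {m : ℕ}
    (h : Contains G (starPlusE m)) : ∃ v, m ≤ G.degree v :=
  contains_starG_iff.1 (h.of_le (starG_le_starPlusE m))

theorem degree_compl_sub_one_le_degree [Fintype V] [DecidableRel G.Adj] [DecidableEq V] {u v : V}
    (hvu : Gᶜ.Adj v u) (h : ∀ w, Gᶜ.Adj v w → ¬Gᶜ.Adj u w) :
    Gᶜ.degree v - 1 ≤ G.degree u := by
  rw [← card_neighborFinset_eq_degree, ← card_neighborFinset_eq_degree,
    ← Finset.card_erase_of_mem ((mem_neighborFinset _ _ _).2 hvu)]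
  refine Finset.card_le_card fun w hw => ?_
  rw [Finset.mem_erase, mem_neighborFinset] at hw
  rw [mem_neighborFinset]
  by_contra huw
  exact h w hw.2 ((compl_adj G u w).2 ⟨hw.1.symm, huw⟩)

theorem exists_degree_ne_of_odd [Fintype V] [DecidableRel G.Adj] {d : ℕ}
    (hV : Odd (Fintype.card V)) (hd : Odd d) : ∃ v, G.degree v ≠ d := by
  classical
  by_contra! h
  have := G.even_card_odd_degree_vertices
  simp only [h, hd, Finset.filter_true, Finset.card_univ] at this
  exact Nat.not_even_iff_odd.2 hV this

theorem contains_comap {W : Type*} (f : W ↪ V) : Contains G (G.comap f) :=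
  ⟨f, f.injective, fun _ _ h => h⟩

theorem contains_compl_comap {W : Type*} (f : W ↪ V) : Contains Gᶜ (G.comap f)ᶜ :=
  ⟨f, f.injective, fun _ _ h => ⟨f.injective.ne h.1, h.2⟩⟩

theorem exists_fin_not_contains_of_le [Fintype V] {W W' : Type*} {H : SimpleGraph W}
    {H' : SimpleGraph W'} (hG : ¬Contains G H) (hGc : ¬Contains Gᶜ H') {N : ℕ}
    (hN : N ≤ Fintype.card V) :
    ∃ R : SimpleGraph (Fin N), ¬Contains R H ∧ ¬Contains Rᶜ H' := by
  let f : Fin N ↪ V := (Fin.castLEEmb hN).trans (Fintype.equivFin V).symm.toEmbedding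
  exact ⟨G.comap f, fun h => hG (h.trans (contains_comap f)),
    fun h => hGc (h.trans (contains_compl_comap f))⟩

def cayleySumGraph [Add V] (S : Finset V) : SimpleGraph V :=
  SimpleGraph.fromRel fun a b => a + b ∈ S

section CayleySumGraph

variable [AddCommGroup V] [DecidableEq V] (S : Finset V)

theorem neighborFinset_cayleySumGraph (v : V) [Fintype ((cayleySumGraph S).neighborSet v)] :
    (cayleySumGraph S).neighborFinset v = (S.image (· - v)).erase v := by
  ext w
  rw [mem_neighborFinset, Finset.mem_erase, Finset.mem_image]
  simp only [cayleySumGraph, fromRel_adj, add_comm w v, or_self, ne_comm]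
  constructor
  · rintro ⟨hne, hS⟩
    exact ⟨hne, v + w, hS, by abel⟩
  · rintro ⟨hne, s, hs, rfl⟩
    exact ⟨hne, by simpa using hs⟩

variable [Fintype V] [DecidableRel (cayleySumGraph S).Adj] (v : V)

theorem degree_cayleySumGraph_le : (cayleySumGraph S).degree v ≤ #S := by
  rw [← card_neighborFinset_eq_degree, neighborFinset_cayleySumGraph]
  exact (Finset.card_erase_le).trans Finset.card_image_le

theorem card_sub_one_le_degree_cayleySumGraph : #S - 1 ≤ (cayleySumGraph S).degree v := by
  rw [← card_neighborFinset_eq_degree, neighborFinset_cayleySumGraph,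
    ← Finset.card_image_of_injective S (sub_left_injective (b := v))]
  exact Finset.pred_card_le_card_erase

theorem not_contains_starG_cayleySumGraph {n : ℕ} (hS : #S < n) :
    ¬Contains (cayleySumGraph S) (starG n) := by
  rw [contains_starG_iff]
  rintro ⟨v, hv⟩
  have := degree_cayleySumGraph_le S v
  omega

theorem not_contains_compl_starPlusE_cayleySumGraph {m : ℕ} (hS : Fintype.card V < #S + m) :
    ¬Contains (cayleySumGraph S)ᶜ (starPlusE m) := by
  rintro h
  obtain ⟨v, hv⟩ := exists_le_degree_of_contains_starPlusE h
  have := card_sub_one_le_degree_cayleySumGraph S v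
  have := S.card_le_univ
  rw [degree_compl] at hv
  omega

end CayleySumGraph

theorem contains_starG_or_compl_starPlusE [Fintype V] [DecidableRel G.Adj] {n m : ℕ}
    (hn : Even n) (hm : Even m) (hn0 : n ≠ 0) (hnm : n + 1 ≤ m)
    (hV : Fintype.card V = n + m - 1) : Contains G (starG n) ∨ Contains Gᶜ (starPlusE m) := by
  classical
  obtain ⟨v, hv⟩ := exists_degree_ne_of_odd (G := G) (d := n - 1)
    (by rw [hV]; exact Nat.Even.sub_odd (by omega) (hn.add hm) odd_one)
    (Nat.Even.sub_odd (by omega) hn odd_one)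
  rcases lt_or_gt_of_ne hv with hlt | hgt
  · have hblue : m ≤ Gᶜ.degree v := by rw [degree_compl]; omega
    by_cases htri : ∃ u w, Gᶜ.Adj v u ∧ Gᶜ.Adj v w ∧ Gᶜ.Adj u w
    · obtain ⟨u, w, hu, hw, huw⟩ := htri
      exact .inr (contains_starPlusE_of_adj (by omega) hblue hu hw huw)
    · push Not at htri
      obtain ⟨u, hu⟩ := (degree_pos_iff_exists_adj _ _).1 (by omega : 0 < Gᶜ.degree v)
      have := degree_compl_sub_one_le_degree hu (htri u · hu)
      exact .inl (contains_starG_iff.2 ⟨u, by omega⟩)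
  · exact .inl (contains_starG_iff.2 ⟨v, by omega⟩)

end

theorem stmt_2 (n m : ℕ) (hne : Even n) (hme : Even m) (hn : 3 ≤ n) (hnm : n + 2 ≤ m) :
    IsLeast {N : ℕ | ∀ R : SimpleGraph (Fin N),
      Contains R (starG n) ∨ Contains Rᶜ (starPlusE m)} (n + m - 1) := by
  classical
  refine ⟨fun R => contains_starG_or_compl_starPlusE hne hme (by omega) (by omega)
    (Fintype.card_fin _), fun N hN => ?_⟩
  by_contra! hlt
  have : NeZero (n + m - 2) := ⟨by omega⟩
  obtain ⟨S, -, hS⟩ := (univ : Finset (Fin (n + m - 2))).exists_subset_card_eq (n := n - 1)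
    (by simp; omega)
  obtain ⟨R, hR, hRc⟩ := exists_fin_not_contains_of_le
    (not_contains_starG_cayleySumGraph S (n := n) (by omega))
    (not_contains_compl_starPlusE_cayleySumGraph S (m := m) (by simp; omega)) (N := N)
    (by simp; omega)
  exact (hN R).elim hR hRc
end

section
/- If n is odd with 3 ≤ n ≤ m−2, then there exists a red/blue coloring of K_{n+m−1} with no red K_{1,n} and no blue K_{1,m}+e; namely, color edge {v_i, v_j} red iff the circular distance between i and j (mod n+m−1) is at most (n−1)/2. -/
open SimpleGraph

lemma mod_shift_inj {N c a b : ℕ} (ha : a < N) (hb : b < N)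
    (h : (a + c) % N = (b + c) % N) : a = b := by
  have h' : a ≡ b [MOD N] := Nat.ModEq.add_right_cancel' c h
  rwa [Nat.ModEq, Nat.mod_eq_of_lt ha, Nat.mod_eq_of_lt hb] at h'

lemma dist_facts {N : ℕ} (a b : Fin N) (hab : a ≠ b) :
    1 ≤ (b.val + N - a.val) % N ∧ (b.val + N - a.val) % N ≤ N - 1 ∧
    (a.val + N - b.val) % N + (b.val + N - a.val) % N = N := by
  have ha := a.isLt; have hb := b.isLt
  have hab' : a.val ≠ b.val := fun h => hab (Fin.ext h)
  rcases Nat.lt_or_ge a.val b.val with h | h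
  · have e1 : b.val + N - a.val = (b.val - a.val) + N := by omega
    have e2 : (b.val + N - a.val) % N = b.val - a.val := by
      rw [e1, Nat.add_mod_right, Nat.mod_eq_of_lt (by omega)]
    have e3 : (a.val + N - b.val) % N = a.val + N - b.val :=
      Nat.mod_eq_of_lt (by omega)
    omega
  · have hlt : b.val < a.val := by omega
    have e1 : a.val + N - b.val = (a.val - b.val) + N := by omega
    have e2 : (a.val + N - b.val) % N = a.val - b.val := by
      rw [e1, Nat.add_mod_right, Nat.mod_eq_of_lt (by omega)]
    have e3 : (b.val + N - a.val) % N = b.val + N - a.val :=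
      Nat.mod_eq_of_lt (by omega)
    omega

theorem stmt_3 (n m : ℕ) (hodd : Odd n) (hn : 3 ≤ n) (hnm : n + 2 ≤ m) :
    ¬ Contains (SimpleGraph.fromRel (fun a b : Fin (n + m - 1) =>
        min ((a.val + (n + m - 1) - b.val) % (n + m - 1))
            ((b.val + (n + m - 1) - a.val) % (n + m - 1)) ≤ (n - 1) / 2)) (starG n) ∧
    ¬ Contains (SimpleGraph.fromRel (fun a b : Fin (n + m - 1) =>
        min ((a.val + (n + m - 1) - b.val) % (n + m - 1))
            ((b.val + (n + m - 1) - a.val) % (n + m - 1)) ≤ (n - 1) / 2))ᶜ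
      (starPlusE m) := by
  obtain ⟨k, hk⟩ := hodd
  set N := n + m - 1 with hN
  have hkn : n - 1 = 2 * k := by omega
  have hkk : (n - 1) / 2 = k := by omega
  have hNk : 4 * k + 3 ≤ N := by omega
  constructor
  · rintro ⟨f, finj, hf⟩
    set S : Finset ℕ := Finset.Icc 1 k ∪ Finset.Icc (N - k) (N - 1) with hS
    have hScard : S.card ≤ 2 * k := by
      refine le_trans (Finset.card_union_le _ _) ?_
      rw [Nat.card_Icc, Nat.card_Icc]; omega
    have hmap : ∀ i : Fin n, ((f i.succ).val + (N - (f 0).val)) % N ∈ S := by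
      intro i
      have hadj : (starG n).Adj 0 i.succ := by
        simp [starG, SimpleGraph.fromRel_adj, (Fin.succ_ne_zero i).symm]
      have hG := hf _ _ hadj
      rw [SimpleGraph.fromRel_adj] at hG
      obtain ⟨hne, hmin⟩ := hG
      obtain ⟨h1, h2, h3⟩ := dist_facts (f 0) (f i.succ) hne
      have hle : ((f 0).val + N - (f i.succ).val) % N ≤ k ∨
          ((f i.succ).val + N - (f 0).val) % N ≤ k := by
        rcases hmin with h | h <;> rw [hkk, min_le_iff] at h <;> omega
      have e : (f i.succ).val + (N - (f 0).val) = (f i.succ).val + N - (f 0).val := by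
        have := (f 0).isLt; omega
      rw [e, hS, Finset.mem_union, Finset.mem_Icc, Finset.mem_Icc]
      omega
    have hinj : Set.InjOn (fun i : Fin n => ((f i.succ).val + (N - (f 0).val)) % N)
        (Finset.univ : Finset (Fin n)) := by
      intro i _ j _ hij
      have : (f i.succ).val = (f j.succ).val :=
        mod_shift_inj (f i.succ).isLt (f j.succ).isLt hij
      exact Fin.succ_injective _ (finj (Fin.ext this))
    have hcard := Finset.card_le_card_of_injOn _ (fun i _ => hmap i) hinj
    simp only [Finset.card_univ, Fintype.card_fin] at hcard
    omega
  · rintro ⟨f, finj, hf⟩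
    set T : Finset ℕ := Finset.Icc (k + 1) (N - 1 - k) with hT
    have hTcard : T.card ≤ N - 1 - 2 * k := by
      rw [Nat.card_Icc]; omega
    have hmap : ∀ i : Fin m, ((f i.succ).val + (N - (f 0).val)) % N ∈ T := by
      intro i
      have hadj : (starPlusE m).Adj 0 i.succ := by
        simp [starPlusE, SimpleGraph.fromRel_adj, (Fin.succ_ne_zero i).symm]
      have hG := hf _ _ hadj
      rw [SimpleGraph.compl_adj] at hG
      obtain ⟨hne, hnadj⟩ := hG
      rw [SimpleGraph.fromRel_adj] at hnadj
      push_neg at hnadj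
      have hmin := hnadj hne
      obtain ⟨h1, h2, h3⟩ := dist_facts (f 0) (f i.succ) hne
      have hgt : k < ((f 0).val + N - (f i.succ).val) % N ∧
          k < ((f i.succ).val + N - (f 0).val) % N := by
        have hm1 := hmin.1
        rw [hkk, lt_min_iff] at hm1
        omega
      have e : (f i.succ).val + (N - (f 0).val) = (f i.succ).val + N - (f 0).val := by
        have := (f 0).isLt; omega
      rw [e, hT, Finset.mem_Icc]
      omega
    have hinj : Set.InjOn (fun i : Fin m => ((f i.succ).val + (N - (f 0).val)) % N)
        (Finset.univ : Finset (Fin m)) := by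
      intro i _ j _ hij
      have : (f i.succ).val = (f j.succ).val :=
        mod_shift_inj (f i.succ).isLt (f j.succ).isLt hij
      exact Fin.succ_injective _ (finj (Fin.ext this))
    have hcard := Finset.card_le_card_of_injOn _ (fun i _ => hmap i) hinj
    simp only [Finset.card_univ, Fintype.card_fin] at hcard
    omega
end

section
/- If n or m is odd and 3 ≤ n ≤ m−2, then r(K_{1,n}, K_{1,m}+e) = n+m. -/
open SimpleGraph

open Finset

lemma starG_adj {n : ℕ} {a b : Fin (n+1)} :
    (starG n).Adj a b ↔ a ≠ b ∧ (a = 0 ∨ b = 0) := by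
  simp [starG, fromRel_adj]

lemma starPlusE_adj {m : ℕ} {a b : Fin (m+1)} :
    (starPlusE m).Adj a b ↔ a ≠ b ∧ ((a = 0 ∨ (a = 1 ∧ b = 2)) ∨ (b = 0 ∨ (b = 1 ∧ a = 2))) := by
  simp [starPlusE, fromRel_adj]

lemma contains_mono {U V W : Type*} {G : SimpleGraph V} {G' : SimpleGraph W} {H : SimpleGraph U}
    (f : V → W) (hf : Function.Injective f) (hadj : ∀ a b, G.Adj a b → G'.Adj (f a) (f b)) :
    Contains G H → Contains G' H := by
  rintro ⟨g, hg, ha⟩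
  exact ⟨f ∘ g, hf.comp hg, fun a b h => hadj _ _ (ha a b h)⟩

lemma deg_of_contains_starG {V : Type*} [Fintype V] {n : ℕ} {G : SimpleGraph V}
    [DecidableRel G.Adj] (h : Contains G (starG n)) : ∃ v, n ≤ G.degree v := by
  classical
  obtain ⟨f, hf, ha⟩ := h
  refine ⟨f 0, ?_⟩
  have hmem : ∀ i : Fin n, f i.succ ∈ G.neighborFinset (f 0) := fun i => by
    rw [mem_neighborFinset]
    exact ha 0 i.succ (starG_adj.2 ⟨(Fin.succ_ne_zero i).symm, Or.inl rfl⟩)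
  calc n = (Finset.univ : Finset (Fin n)).card := by simp
    _ ≤ (G.neighborFinset (f 0)).card :=
        Finset.card_le_card_of_injOn (fun i => f i.succ) (fun i _ => hmem i)
          (fun i _ j _ hij => Fin.succ_injective _ (hf hij))
    _ = G.degree (f 0) := rfl

lemma deg_of_contains_starPlusE {V : Type*} [Fintype V] {m : ℕ} {G : SimpleGraph V}
    [DecidableRel G.Adj] (h : Contains G (starPlusE m)) : ∃ v, m ≤ G.degree v := by
  classical
  obtain ⟨f, hf, ha⟩ := h
  refine ⟨f 0, ?_⟩
  have hmem : ∀ i : Fin m, f i.succ ∈ G.neighborFinset (f 0) := fun i => by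
    rw [mem_neighborFinset]
    exact ha 0 i.succ (starPlusE_adj.2 ⟨(Fin.succ_ne_zero i).symm, Or.inl (Or.inl rfl)⟩)
  calc m = (Finset.univ : Finset (Fin m)).card := by simp
    _ ≤ (G.neighborFinset (f 0)).card :=
        Finset.card_le_card_of_injOn (fun i => f i.succ) (fun i _ => hmem i)
          (fun i _ j _ hij => Fin.succ_injective _ (hf hij))
    _ = G.degree (f 0) := rfl

lemma contains_starG_of_deg {V : Type*} [Fintype V] [DecidableEq V] {n : ℕ} {G : SimpleGraph V}
    [DecidableRel G.Adj] {v : V} (h : n ≤ G.degree v) : Contains G (starG n) := by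
  obtain ⟨s, hs, hcard⟩ := Finset.exists_subset_card_eq (s := G.neighborFinset v) (n := n) h
  have e : Fin n ≃ s := (s.equivFin.trans (finCongr hcard)).symm
  have hsub : ∀ i : Fin n, (e i : V) ∈ G.neighborFinset v := fun i => hs (e i).2
  refine ⟨Fin.cons v (fun i => (e i : V)), ?_, ?_⟩
  · rw [Fin.cons_injective_iff]
    constructor
    · rintro ⟨i, hi⟩
      have hi' : (e i : V) = v := hi
      have := hsub i
      rw [hi', mem_neighborFinset] at this
      exact G.irrefl this
    · exact fun i j hij => e.injective (Subtype.ext hij)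
  · intro a b hab
    rw [starG_adj] at hab
    obtain ⟨hne, h0⟩ := hab
    rcases h0 with rfl | rfl
    · obtain ⟨j, rfl⟩ := Fin.eq_succ_of_ne_zero (Ne.symm hne)
      simp only [Fin.cons_zero, Fin.cons_succ]
      exact (mem_neighborFinset _ _ _).1 (hsub j)
    · obtain ⟨j, rfl⟩ := Fin.eq_succ_of_ne_zero hne
      simp only [Fin.cons_zero, Fin.cons_succ]
      exact ((mem_neighborFinset _ _ _).1 (hsub j)).symm

lemma contains_starPlusE_of {V : Type*} [Fintype V] [DecidableEq V] {k : ℕ} {G : SimpleGraph V}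
    [DecidableRel G.Adj] {v b1 b2 : V} (h1 : G.Adj v b1) (h2 : G.Adj v b2) (h12 : G.Adj b1 b2)
    (hdeg : k + 2 ≤ G.degree v) : Contains G (starPlusE (k + 2)) := by
  set T := G.neighborFinset v \ {b1, b2} with hT
  have hTcard : k ≤ T.card := by
    have h1' : (G.neighborFinset v) ⊆ T ∪ {b1, b2} := by
      intro x hx
      by_cases hx1 : x ∈ ({b1, b2} : Finset V)
      · exact Finset.mem_union_right _ hx1
      · exact Finset.mem_union_left _ (Finset.mem_sdiff.2 ⟨hx, hx1⟩)
    have := Finset.card_le_card h1'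
    have h2' := Finset.card_union_le T ({b1, b2} : Finset V)
    have h3' : ({b1, b2} : Finset V).card ≤ 2 := Finset.card_insert_le _ _ |>.trans (by simp)
    have : G.degree v ≤ T.card + 2 := by
      unfold SimpleGraph.degree
      omega
    omega
  obtain ⟨s, hs, hcard⟩ := Finset.exists_subset_card_eq (s := T) (n := k) hTcard
  have e : Fin k ≃ s := (s.equivFin.trans (finCongr hcard)).symm
  have hsT : ∀ i : Fin k, (e i : V) ∈ T := fun i => hs (e i).2
  have hsnb : ∀ i : Fin k, G.Adj v (e i : V) := fun i =>
    (mem_neighborFinset _ _ _).1 (Finset.mem_sdiff.1 (hsT i)).1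
  have hsne : ∀ i : Fin k, (e i : V) ≠ b1 ∧ (e i : V) ≠ b2 := fun i => by
    have := (Finset.mem_sdiff.1 (hsT i)).2
    simp only [Finset.mem_insert, Finset.mem_singleton] at this
    exact ⟨fun h => this (Or.inl h), fun h => this (Or.inr h)⟩
  set g : Fin (k + 2) → V := Fin.cons b1 (Fin.cons b2 (fun i => (e i : V))) with hg
  have hgmem : ∀ j : Fin (k + 2), G.Adj v (g j) := by
    intro j
    refine Fin.cases ?_ (fun i => ?_) j
    · simpa [hg] using h1
    · refine Fin.cases ?_ (fun i' => ?_) i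
      · simpa [hg] using h2
      · simpa [hg] using hsnb i'
  set F : Fin (k + 2 + 1) → V := Fin.cons v g with hF
  refine ⟨F, ?_, ?_⟩
  · rw [hF, Fin.cons_injective_iff]
    constructor
    · rintro ⟨j, hj⟩
      exact G.irrefl (hj ▸ hgmem j)
    · rw [hg, Fin.cons_injective_iff]
      refine ⟨?_, ?_⟩
      · rw [Fin.range_cons]
        simp only [Set.mem_insert_iff, Set.mem_range]
        rintro (h | ⟨i, hi⟩)
        · exact h12.ne h
        · exact (hsne i).1 hi
      · rw [Fin.cons_injective_iff]
        refine ⟨?_, fun i j hij => e.injective (Subtype.ext hij)⟩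
        rintro ⟨i, hi⟩
        exact (hsne i).2 hi
  · intro a b hab
    rw [starPlusE_adj] at hab
    obtain ⟨hne, hcases⟩ := hab
    have e1 : (1 : Fin (k + 2 + 1)) = Fin.succ 0 := Fin.succ_zero_eq_one.symm
    have e2 : (2 : Fin (k + 2 + 1)) = Fin.succ 1 := Fin.succ_one_eq_two.symm
    have e1' : (1 : Fin (k + 2)) = Fin.succ 0 := Fin.succ_zero_eq_one.symm
    have hf1 : F 1 = b1 := by
      rw [hF, e1, Fin.cons_succ, hg, Fin.cons_zero]
    have hf2 : F 2 = b2 := by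
      rw [hF, e2, Fin.cons_succ, hg, e1', Fin.cons_succ, Fin.cons_zero]
    rcases hcases with (rfl | ⟨rfl, rfl⟩) | (rfl | ⟨rfl, rfl⟩)
    · obtain ⟨j, rfl⟩ := Fin.eq_succ_of_ne_zero (Ne.symm hne)
      simpa [hF] using hgmem j
    · rw [hf1, hf2]; exact h12
    · obtain ⟨j, rfl⟩ := Fin.eq_succ_of_ne_zero hne
      simpa [hF] using (hgmem j).symm
    · rw [hf1, hf2]; exact h12.symm

lemma mem_ramsey (n m : ℕ) (hn : 3 ≤ n) (hnm : n + 2 ≤ m) (R : SimpleGraph (Fin (n + m))) :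
    Contains R (starG n) ∨ Contains Rᶜ (starPlusE m) := by
  classical
  by_cases h : ∃ v, n ≤ R.degree v
  · obtain ⟨v, hv⟩ := h
    exact Or.inl (contains_starG_of_deg hv)
  · push_neg at h
    right
    obtain ⟨k, rfl⟩ : ∃ k, m = k + 2 := ⟨m - 2, by omega⟩
    have hcardV : Fintype.card (Fin (n + (k + 2))) = n + (k + 2) := by simp
    have hdegc : ∀ v, k + 2 ≤ Rᶜ.degree v := by
      intro v
      have h1 := R.degree_compl v
      have h2 := h v
      rw [hcardV] at h1
      omega
    have hpos : 0 < n + (k + 2) := by omega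
    set v0 : Fin (n + (k + 2)) := ⟨0, hpos⟩ with hv0
    set B := Rᶜ.neighborFinset v0 with hB
    by_cases hedge : ∃ b1 ∈ B, ∃ b2 ∈ B, Rᶜ.Adj b1 b2
    · obtain ⟨b1, hb1, b2, hb2, h12⟩ := hedge
      exact contains_starPlusE_of ((mem_neighborFinset _ _ _).1 hb1)
        ((mem_neighborFinset _ _ _).1 hb2) h12 (hdegc v0)
    · exfalso
      push_neg at hedge
      have hBcard : k + 2 ≤ B.card := hdegc v0
      obtain ⟨u, hu⟩ : B.Nonempty := Finset.card_pos.1 (by omega)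
      have hsub : B.erase u ⊆ R.neighborFinset u := by
        intro b hb
        obtain ⟨hbu, hbB⟩ := Finset.mem_erase.1 hb
        have := hedge u hu b hbB
        rw [compl_adj] at this
        rw [mem_neighborFinset]
        by_contra hnadj
        exact this ⟨fun hh => hbu hh.symm, hnadj⟩
      have := Finset.card_le_card hsub
      rw [Finset.card_erase_of_mem hu] at this
      have hud := h u
      unfold SimpleGraph.degree at hud
      omega

def circ (k : ℕ) (A : Finset ℕ) : SimpleGraph (ZMod k) :=
  SimpleGraph.fromRel (fun a b => (a - b).val ∈ A)

instance circDec (k : ℕ) (A : Finset ℕ) : DecidableRel (circ k A).Adj := fun a b =>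
  decidable_of_iff _ (SimpleGraph.fromRel_adj _ a b).symm

lemma circ_adj {k : ℕ} [NeZero k] {A : Finset ℕ}
    (hA : ∀ j ∈ A, 0 < j ∧ j < k ∧ k - j ∈ A) {a b : ZMod k} :
    (circ k A).Adj a b ↔ (a - b).val ∈ A := by
  rw [circ, fromRel_adj]
  constructor
  · rintro ⟨hne, h | h⟩
    · exact h
    · have hba : b - a ≠ 0 := sub_ne_zero.2 (Ne.symm hne)
      have : a - b = -(b - a) := by ring
      rw [this, ZMod.neg_val, if_neg hba]
      exact (hA _ h).2.2
  · intro h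
    have h0 := (hA _ h).1
    refine ⟨?_, Or.inl h⟩
    intro hab
    rw [hab, sub_self, ZMod.val_zero] at h0
    omega

lemma circ_degree {k : ℕ} [NeZero k] {A : Finset ℕ}
    (hA : ∀ j ∈ A, 0 < j ∧ j < k ∧ k - j ∈ A) (v : ZMod k) :
    (circ k A).degree v = A.card := by
  rw [← card_neighborFinset_eq_degree, neighborFinset_eq_filter]
  refine Finset.card_nbij' (fun b => (v - b).val) (fun a => v - (a : ZMod k)) ?_ ?_ ?_ ?_
  · intro b hb
    exact (circ_adj hA).1 (Finset.mem_filter.1 hb).2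
  · intro a ha
    refine Finset.mem_filter.2 ⟨Finset.mem_univ _, (circ_adj hA).2 ?_⟩
    rw [sub_sub_cancel, ZMod.val_cast_of_lt (hA _ ha).2.1]
    exact ha
  · intro b _
    show v - ((v - b).val : ZMod k) = b
    rw [ZMod.natCast_rightInverse (v - b), sub_sub_cancel]
  · intro a ha
    show (v - (v - (a : ZMod k))).val = a
    rw [sub_sub_cancel, ZMod.val_cast_of_lt (hA _ ha).2.1]

lemma exists_A (n m : ℕ) (hodd : Odd n ∨ Odd m) (hn : 3 ≤ n) (hnm : n + 2 ≤ m) :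
    ∃ A : Finset ℕ, A.card = n - 1 ∧
      ∀ j ∈ A, 0 < j ∧ j < n + m - 1 ∧ (n + m - 1) - j ∈ A := by
  set k := n + m - 1 with hk
  rcases Nat.even_or_odd n with he | ho
  · -- n even, so m odd
    have hmo : Odd m := by
      rcases hodd with h | h
      · exact absurd h (Nat.not_odd_iff_even.2 he)
      · exact h
    obtain ⟨t, ht⟩ : ∃ t, n = 2 * t + 2 := by
      obtain ⟨r, hr⟩ := he; exact ⟨r - 1, by omega⟩
    obtain ⟨u, hu⟩ := hmo
    set s := t + u + 1 with hs
    have hkeq : k = 2 * s := by omega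
    refine ⟨Finset.Icc 1 t ∪ ({s} ∪ Finset.Icc (k - t) (k - 1)), ?_, ?_⟩
    · have ht1 : 1 ≤ t := by omega
      have d1 : Disjoint ({s} : Finset ℕ) (Finset.Icc (k - t) (k - 1)) := by
        rw [Finset.disjoint_left]
        intro a ha hb
        rw [Finset.mem_singleton] at ha
        rw [Finset.mem_Icc] at hb
        omega
      have d2 : Disjoint (Finset.Icc 1 t) (({s} : Finset ℕ) ∪ Finset.Icc (k - t) (k - 1)) := by
        rw [Finset.disjoint_left]
        intro a ha hb
        rw [Finset.mem_Icc] at ha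
        rw [Finset.mem_union, Finset.mem_singleton, Finset.mem_Icc] at hb
        omega
      rw [Finset.card_union_of_disjoint d2, Finset.card_union_of_disjoint d1]
      simp [Nat.card_Icc]
      omega
    · intro j hj
      simp only [Finset.mem_union, Finset.mem_Icc, Finset.mem_singleton] at hj ⊢
      omega
  · -- n odd
    obtain ⟨t, ht⟩ := ho
    refine ⟨Finset.Icc 1 t ∪ Finset.Icc (k - t) (k - 1), ?_, ?_⟩
    · have d : Disjoint (Finset.Icc 1 t) (Finset.Icc (k - t) (k - 1)) := by
        rw [Finset.disjoint_left]
        intro a ha hb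
        rw [Finset.mem_Icc] at ha hb
        omega
      rw [Finset.card_union_of_disjoint d]
      simp [Nat.card_Icc]
      omega
    · intro j hj
      simp only [Finset.mem_union, Finset.mem_Icc] at hj ⊢
      omega

lemma not_ramsey (n m N : ℕ) (hodd : Odd n ∨ Odd m) (hn : 3 ≤ n) (hnm : n + 2 ≤ m)
    (hN : N < n + m) :
    ∃ R : SimpleGraph (Fin N), ¬Contains R (starG n) ∧ ¬Contains Rᶜ (starPlusE m) := by
  classical
  obtain ⟨A, hAcard, hA⟩ := exists_A n m hodd hn hnm
  set k := n + m - 1 with hk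
  haveI : NeZero k := ⟨by omega⟩
  have hNk : N ≤ k := by omega
  set f : Fin N → ZMod k := fun i => ((i : ℕ) : ZMod k) with hf
  have hfinj : Function.Injective f := by
    intro i j hij
    have hi : ((i : ℕ) : ZMod k).val = (i : ℕ) := ZMod.val_cast_of_lt (by omega)
    have hj : ((j : ℕ) : ZMod k).val = (j : ℕ) := ZMod.val_cast_of_lt (by omega)
    have hij' : ((i : ℕ) : ZMod k) = ((j : ℕ) : ZMod k) := hij
    apply Fin.ext
    rw [← hi, ← hj, hij']
  refine ⟨(circ k A).comap f, ?_, ?_⟩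
  · intro h
    have h2 : Contains (circ k A) (starG n) :=
      contains_mono f hfinj (fun a b hab => hab) h
    obtain ⟨v, hv⟩ := deg_of_contains_starG h2
    rw [circ_degree hA, hAcard] at hv
    omega
  · intro h
    have h2 : Contains (circ k A)ᶜ (starPlusE m) := by
      refine contains_mono f hfinj ?_ h
      intro a b hab
      rw [compl_adj] at hab ⊢
      exact ⟨fun hh => hab.1 (hfinj hh), hab.2⟩
    obtain ⟨v, hv⟩ := deg_of_contains_starPlusE h2
    rw [SimpleGraph.degree_compl, circ_degree hA, hAcard, ZMod.card] at hv
    omega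

theorem stmt_5 (n m : ℕ) (hodd : Odd n ∨ Odd m) (hn : 3 ≤ n) (hnm : n + 2 ≤ m) :
    IsLeast {N : ℕ | ∀ R : SimpleGraph (Fin N),
      Contains R (starG n) ∨ Contains Rᶜ (starPlusE m)} (n + m) := by
  constructor
  · intro R
    exact mem_ramsey n m hn hnm R
  · intro N hN
    by_contra hlt
    push_neg at hlt
    obtain ⟨R, h1, h2⟩ := not_ramsey n m N hodd hn hnm hlt
    rcases hN R with h | h
    · exact h1 h
    · exact h2 h
end

section
/- If n and m are both even with 3 ≤ n ≤ m−2, then there exists a red/blue coloring of K_{n+m−2} ⊔ K_{1,n+m−3} (the complete graph on n+m−2 vertices plus an extra vertex joined to n+m−3 of them) containing no red K_{1,n} and no blue K_{1,m}+e. -/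
/-
Write `n = 2h + 2`, `m = 2c + 2` and `N = n + m - 2 = 2q` with `q = h + c + 1`. Identify the
first `N` vertices with `ℤ/N` and colour red the circulant graph with jumps `±1, …, ±h` together
with the antipodal matching `x ~ x + q`, except that on `S = [0, h) ∪ (q + [0, h))` (a union
of antipodal pairs avoiding `N - 1`) the antipodal edges are replaced by edges to the extra
vertex. Then every vertex of `ℤ/N` has red degree `2h + 1 = n - 1` and the extra vertex has red
degree `|S| = 2h`. A vertex of `ℤ/N` has at most `N` host neighbours and the extra vertex has
`N - 1`, so every blue degree is at most `2c + 1 = m - 1`. A red `K_{1,n}` or a blue `K_{1,m}+e`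
would need a vertex of red degree `n`, resp. blue degree `m`.
-/

open SimpleGraph

/-- `K_N ⊔ K_{1,k}` : complete graph on the first `N` vertices of `Fin (N+1)`,
with the last vertex joined to exactly the `k` vertices of value `< k`. -/
def KstarK1 (N k : ℕ) : SimpleGraph (Fin (N + 1)) :=
  SimpleGraph.fromRel (fun a b => (a.val < N ∧ b.val < N) ∨ (a.val = N ∧ b.val < k))

/-- `ArrowsHost Host G H` : every red/blue coloring of the edges of `Host`
contains a red copy of `G` or a blue copy of `H`. -/
def ArrowsHost {V W₁ W₂ : Type*} (Host : SimpleGraph V)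
    (G : SimpleGraph W₁) (H : SimpleGraph W₂) : Prop :=
  ∀ R : SimpleGraph V, R ≤ Host → Contains R G ∨ Contains (Host \ R) H

open Finset Pointwise

namespace SimpleGraph

section Degree

variable {V W : Type*} [Fintype V] {G : SimpleGraph V} [DecidableRel G.Adj]

lemma degree_comap_equiv (e : W ≃ V) (v : W) [Fintype ((G.comap e).neighborSet v)] :
    (G.comap e).degree v = G.degree (e v) :=
  ((Iso.comap e G).degree_eq v).symm

lemma degree_sdiff_of_le [DecidableEq V] {R : SimpleGraph V} [DecidableRel R.Adj] (hR : R ≤ G)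
    (v : V) [Fintype ((G \ R).neighborSet v)] : (G \ R).degree v = G.degree v - R.degree v := by
  simp only [← card_neighborFinset_eq_degree, neighborFinset_sdiff]
  exact card_sdiff_of_subset fun u hu => by simpa using hR (by simpa using hu)

end Degree

lemma IsUniversal.degree_eq_card_sub_one {V : Type*} [Fintype V] {G : SimpleGraph V} {v : V}
    [Fintype (G.neighborSet v)] (hv : G.IsUniversal v) : G.degree v = Fintype.card V - 1 := by
  classical
  convert (G.degree_eq_card_sub_one v).2 hv

variable {Γ : Type*} [AddCommGroup Γ]

/-- The vertex `none` is an apex joined to `S`; on `Γ` this is the circulant graph with jumps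
`J ∪ {t}`, except that the `t`-edges at vertices of `S` are removed. -/
def apexCirculant (J S : Finset Γ) (t : Γ) : SimpleGraph (Option Γ) :=
  SimpleGraph.fromRel fun
    | some x, some y => y - x ∈ J ∨ (y - x = t ∧ x ∉ S)
    | none, some x => x ∈ S
    | _, _ => False

variable {J S : Finset Γ} {t : Γ}

@[simp]
lemma apexCirculant_adj_none_some {x : Γ} :
    (apexCirculant J S t).Adj none (some x) ↔ x ∈ S := by
  simp [apexCirculant]

lemma apexCirculant_adj_some_some (hJ : ∀ j ∈ J, -j ∈ J) (hJ0 : 0 ∉ J) (ht : t + t = 0)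
    (ht0 : t ≠ 0) (hS : ∀ x ∈ S, x + t ∈ S) {x y : Γ} :
    (apexCirculant J S t).Adj (some x) (some y) ↔ y - x ∈ J ∨ (y = x + t ∧ x ∉ S) := by
  have hneg : -t = t := neg_eq_of_add_eq_zero_left ht
  simp only [apexCirculant, fromRel_adj, ne_eq, Option.some.injEq]
  constructor
  · rintro ⟨-, (h | ⟨h, hx⟩) | h | ⟨h, hy⟩⟩
    · exact .inl h
    · exact .inr ⟨by rw [← h]; abel, hx⟩
    · exact .inl (by simpa using hJ _ h)
    · have hyx : y = x + t := by rw [← hneg, ← h]; abel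
      exact .inr ⟨hyx, fun hx => hy (hyx ▸ hS x hx)⟩
  · rintro (h | ⟨rfl, hx⟩)
    · exact ⟨fun hxy => hJ0 (by simpa [hxy] using h), .inl (.inl h)⟩
    · exact ⟨by simpa [eq_comm] using ht0, .inl (.inr ⟨by abel, hx⟩)⟩

lemma apexCirculant_degree_none [Fintype Γ] [Fintype ((apexCirculant J S t).neighborSet none)] :
    (apexCirculant J S t).degree none = #S := by
  have hnbrs : (apexCirculant J S t).neighborFinset none = S.map .some := by
    ext (_ | y) <;> simp
  rw [← card_neighborFinset_eq_degree, hnbrs, card_map]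

lemma apexCirculant_neighborFinset_some [Fintype Γ] [DecidableEq Γ] (hJ : ∀ j ∈ J, -j ∈ J)
    (hJ0 : 0 ∉ J) (ht : t + t = 0) (ht0 : t ≠ 0) (hS : ∀ x ∈ S, x + t ∈ S) (x : Γ)
    [Fintype ((apexCirculant J S t).neighborSet (some x))] :
    (apexCirculant J S t).neighborFinset (some x) =
      insert (if x ∈ S then none else some (x + t)) ((J.map (addLeftEmbedding x)).map .some) := by
  ext (_ | y)
  · simp [adj_comm]
  · simp [apexCirculant_adj_some_some hJ hJ0 ht ht0 hS, ← eq_sub_iff_add_eq', or_comm, and_comm]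

lemma apexCirculant_degree_some [Fintype Γ] [DecidableEq Γ] (hJ : ∀ j ∈ J, -j ∈ J)
    (hJ0 : 0 ∉ J) (ht : t + t = 0) (ht0 : t ≠ 0) (htJ : t ∉ J) (hS : ∀ x ∈ S, x + t ∈ S)
    (x : Γ) [Fintype ((apexCirculant J S t).neighborSet (some x))] :
    (apexCirculant J S t).degree (some x) = #J + 1 := by
  rw [← card_neighborFinset_eq_degree, apexCirculant_neighborFinset_some hJ hJ0 ht ht0 hS,
    card_insert_of_notMem, card_map, card_map]
  split_ifs <;> simp [htJ]

end SimpleGraph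

section Containment

variable {V W : Type*} [Fintype V] {G : SimpleGraph V} [DecidableRel G.Adj]

lemma Contains.exists_degree_le_s13 {H : SimpleGraph W} (hGH : Contains G H) (w : W)
    [Fintype (H.neighborSet w)] : ∃ v, H.degree w ≤ G.degree v := by
  obtain ⟨f, hf, hadj⟩ := hGH
  exact ⟨f w, Copy.degree_le ⟨⟨f, hadj _ _⟩, hf⟩ w⟩

lemma not_contains_of_forall_degree_lt {H : SimpleGraph W} (w : W) [Fintype (H.neighborSet w)]
    (hG : ∀ v, G.degree v < H.degree w) : ¬ Contains G H := fun hGH =>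
  let ⟨v, hv⟩ := hGH.exists_degree_le_s13 w
  (hG v).not_ge hv

end Containment

lemma isUniversal_starG (n : ℕ) : (starG n).IsUniversal 0 := fun b hb => by
  simp [starG, hb]

lemma isUniversal_starPlusE (m : ℕ) : (starPlusE m).IsUniversal 0 := fun b hb => by
  simp [starPlusE, hb]

lemma KstarK1_degree_last_le {N k : ℕ} (hk : k ≤ N)
    [Fintype ((KstarK1 N k).neighborSet (Fin.last N))] :
    (KstarK1 N k).degree (Fin.last N) ≤ k := by
  rw [← card_neighborFinset_eq_degree]
  calc _ ≤ #(Iio (⟨k, by omega⟩ : Fin (N + 1))) := card_le_card fun y hy => by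
        rw [mem_neighborFinset, KstarK1, fromRel_adj] at hy
        simp only [mem_Iio, Fin.lt_def, Fin.val_last] at hy ⊢
        omega
    _ = k := Fin.card_Iio _

lemma comap_finSuccEquivLast_le_KstarK1 {N k : ℕ} {G : SimpleGraph (Option (Fin N))}
    (hG : ∀ i, G.Adj none (some i) → i.val < k) : G.comap finSuccEquivLast ≤ KstarK1 N k := by
  intro x y hxy
  refine (fromRel_adj _ _ _).2 ⟨hxy.ne, ?_⟩
  induction x using Fin.lastCases with
  | last =>
    induction y using Fin.lastCases with
    | last => exact (hxy.ne rfl).elim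
    | cast j =>
      rw [comap_adj, finSuccEquivLast_last, finSuccEquivLast_castSucc] at hxy
      exact .inl (.inr ⟨Fin.val_last _, hG _ hxy⟩)
  | cast i =>
    induction y using Fin.lastCases with
    | last =>
      rw [comap_adj, finSuccEquivLast_last, finSuccEquivLast_castSucc] at hxy
      exact .inr (.inr ⟨Fin.val_last _, hG _ hxy.symm⟩)
    | cast j => exact .inl (.inl ⟨i.isLt, j.isLt⟩)

section RedGraph

variable (h c : ℕ)

def antipode : Fin (2 * (h + c + 1)) := ⟨h + c + 1, by omega⟩

def shortJumps : Finset (Fin (2 * (h + c + 1))) :=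
  Icc ⟨1, by omega⟩ ⟨h, by omega⟩ ∪ -Icc ⟨1, by omega⟩ ⟨h, by omega⟩

def apexNbhd : Finset (Fin (2 * (h + c + 1))) :=
  Iio ⟨h, by omega⟩ ∪ (Iio ⟨h, by omega⟩).map (addRightEmbedding (antipode h c))

def redGraph : SimpleGraph (Fin (2 * (h + c + 1) + 1)) :=
  (apexCirculant (shortJumps h c) (apexNbhd h c) (antipode h c)).comap finSuccEquivLast

variable {h c}

lemma val_antipode : (antipode h c).val = h + c + 1 := rfl

lemma antipode_add_self : antipode h c + antipode h c = 0 := by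
  ext
  simp [antipode, Fin.val_add, ← two_mul]

lemma antipode_ne_zero : antipode h c ≠ 0 := by
  simp [antipode, Fin.ext_iff]

lemma val_add_antipode {x : Fin (2 * (h + c + 1))} (hx : x.val < h + c + 1) :
    (x + antipode h c).val = x.val + (h + c + 1) := by
  rw [Fin.val_add, val_antipode, Nat.mod_eq_of_lt (by omega)]

lemma neg_mem_shortJumps {j : Fin (2 * (h + c + 1))} (hj : j ∈ shortJumps h c) :
    -j ∈ shortJumps h c := by
  simp only [shortJumps, mem_union, mem_neg', neg_neg] at hj ⊢
  tauto

lemma zero_notMem_shortJumps : (0 : Fin (2 * (h + c + 1))) ∉ shortJumps h c := by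
  simp [shortJumps, mem_neg']

lemma antipode_notMem_shortJumps : antipode h c ∉ shortJumps h c := by
  rw [shortJumps, mem_union, mem_neg', neg_eq_of_add_eq_zero_left antipode_add_self]
  simp [antipode, Fin.le_def]

lemma card_shortJumps : #(shortJumps h c) = 2 * h := by
  rw [shortJumps, card_union_of_disjoint, card_neg, Fin.card_Icc]
  · dsimp only; omega
  rw [Finset.disjoint_left]
  intro x hx hx'
  rw [mem_neg'] at hx'
  simp only [mem_Icc, Fin.le_def] at hx hx'
  have hsum := congrArg Fin.val (add_neg_cancel x)
  rw [Fin.val_add, Nat.mod_eq_of_lt (by omega), Fin.val_zero] at hsum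
  omega

lemma add_antipode_mem_apexNbhd {x : Fin (2 * (h + c + 1))} (hx : x ∈ apexNbhd h c) :
    x + antipode h c ∈ apexNbhd h c := by
  simp only [apexNbhd, mem_union, mem_map, addRightEmbedding_apply] at hx ⊢
  rcases hx with hx | ⟨y, hy, rfl⟩
  · exact .inr ⟨x, hx, rfl⟩
  · exact .inl (by rwa [add_assoc y, antipode_add_self, add_zero])

lemma card_apexNbhd : #(apexNbhd h c) = 2 * h := by
  rw [apexNbhd, card_union_of_disjoint, card_map, Fin.card_Iio]
  · dsimp only; omega
  rw [Finset.disjoint_left]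
  intro x hx hx'
  simp only [mem_map, mem_Iio, addRightEmbedding_apply, Fin.lt_def] at hx hx'
  obtain ⟨y, hy, rfl⟩ := hx'
  rw [val_add_antipode (by omega)] at hx
  omega

lemma val_lt_of_mem_apexNbhd {x : Fin (2 * (h + c + 1))} (hx : x ∈ apexNbhd h c) :
    x.val < 2 * (h + c + 1) - 1 := by
  simp only [apexNbhd, mem_union, mem_map, mem_Iio, addRightEmbedding_apply, Fin.lt_def] at hx
  rcases hx with hx | ⟨y, hy, rfl⟩
  · omega
  · rw [val_add_antipode (by omega)]
    omega

lemma redGraph_le : redGraph h c ≤ KstarK1 (2 * (h + c + 1)) (2 * (h + c + 1) - 1) :=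
  comap_finSuccEquivLast_le_KstarK1 fun _ hi =>
    val_lt_of_mem_apexNbhd (apexCirculant_adj_none_some.1 hi)

lemma redGraph_degree (x : Fin (2 * (h + c + 1) + 1)) [Fintype ((redGraph h c).neighborSet x)] :
    (redGraph h c).degree x = if x = Fin.last _ then 2 * h else 2 * h + 1 := by
  classical
  erw [degree_comap_equiv]
  induction x using Fin.lastCases with
  | last => rw [finSuccEquivLast_last, apexCirculant_degree_none, card_apexNbhd, if_pos rfl]
  | cast i =>
    rw [finSuccEquivLast_castSucc, apexCirculant_degree_some (fun _ => neg_mem_shortJumps)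
      zero_notMem_shortJumps antipode_add_self antipode_ne_zero antipode_notMem_shortJumps
      (fun _ => add_antipode_mem_apexNbhd), card_shortJumps, if_neg (Fin.castSucc_lt_last i).ne]

lemma redGraph_degree_lt (x : Fin (2 * (h + c + 1) + 1))
    [Fintype ((redGraph h c).neighborSet x)] : (redGraph h c).degree x < 2 * h + 2 := by
  rw [redGraph_degree]
  split_ifs <;> omega

lemma KstarK1_sdiff_redGraph_degree_lt (x : Fin (2 * (h + c + 1) + 1))
    [Fintype ((KstarK1 (2 * (h + c + 1)) (2 * (h + c + 1) - 1) \ redGraph h c).neighborSet x)] :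
    (KstarK1 (2 * (h + c + 1)) (2 * (h + c + 1) - 1) \ redGraph h c).degree x < 2 * c + 2 := by
  classical
  rw [degree_sdiff_of_le redGraph_le, redGraph_degree]
  split_ifs with hx
  · subst hx
    have hhost := KstarK1_degree_last_le (N := 2 * (h + c + 1)) (k := 2 * (h + c + 1) - 1)
      (by omega)
    omega
  · have hhost := (KstarK1 (2 * (h + c + 1)) (2 * (h + c + 1) - 1)).degree_lt_card_verts x
    rw [Fintype.card_fin] at hhost
    omega

end RedGraph

theorem stmt_13 (n m : ℕ) (hne : Even n) (hme : Even m) (hn : 3 ≤ n) (hnm : n + 2 ≤ m) :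
    ∃ R : SimpleGraph (Fin (n + m - 2 + 1)), R ≤ KstarK1 (n + m - 2) (n + m - 3) ∧
      ¬ Contains R (starG n) ∧
      ¬ Contains (KstarK1 (n + m - 2) (n + m - 3) \ R) (starPlusE m) := by
  classical
  obtain ⟨h, rfl⟩ : ∃ h, n = 2 * h + 2 := ⟨n / 2 - 1, by rw [Nat.even_iff] at hne; omega⟩
  obtain ⟨c, rfl⟩ : ∃ c, m = 2 * c + 2 := ⟨m / 2 - 1, by rw [Nat.even_iff] at hme; omega⟩
  rw [show 2 * h + 2 + (2 * c + 2) - 3 = 2 * (h + c + 1) - 1 by omega,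
    show 2 * h + 2 + (2 * c + 2) - 2 = 2 * (h + c + 1) by omega]
  refine ⟨redGraph h c, redGraph_le, ?_, ?_⟩
  · refine not_contains_of_forall_degree_lt 0 fun x => ?_
    rw [IsUniversal.degree_eq_card_sub_one (isUniversal_starG _), Fintype.card_fin,
      Nat.add_sub_cancel]
    exact redGraph_degree_lt x
  · refine not_contains_of_forall_degree_lt 0 fun x => ?_
    rw [IsUniversal.degree_eq_card_sub_one (isUniversal_starPlusE _), Fintype.card_fin,
      Nat.add_sub_cancel]
    exact KstarK1_sdiff_redGraph_degree_lt x
end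

section
/- Suppose a red/blue coloring of K_{2n} (n ≥ 3) has no red K_{1,n} and no blue K_{1,m}+e, where 3 ≤ m ≤ n+1. Then every vertex has red degree exactly n−1 and blue degree exactly n. -/
open SimpleGraph

lemma contains_star_of_degree {V : Type*} [Fintype V] [DecidableEq V]
    (G : SimpleGraph V) [DecidableRel G.Adj] (v : V) (n : ℕ)
    (h : n ≤ G.degree v) : Contains G (starG n) := by
  set s := G.neighborFinset v with hs
  have hcard : n ≤ s.card := h
  set g : Fin n → V := fun i => ((s.equivFin.symm (Fin.castLE hcard i)) : V) with hg
  have hgmem : ∀ i, g i ∈ s := fun i => (s.equivFin.symm (Fin.castLE hcard i)).2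
  have hginj : Function.Injective g := by
    intro i j hij
    have h2 := s.equivFin.symm.injective (Subtype.ext hij)
    exact Fin.ext (by simpa using congrArg Fin.val h2)
  have hgv : ∀ i, g i ≠ v := by
    intro i h
    have hmem := hgmem i
    rw [h] at hmem
    exact G.notMem_neighborFinset_self v hmem
  refine ⟨fun i => if hi : i.val = 0 then v else g ⟨i.val - 1, by omega⟩, ?_, ?_⟩
  · intro a b hab
    dsimp only at hab
    split_ifs at hab with h1 h2 h2
    · exact Fin.ext (by omega)
    · exact absurd hab.symm (hgv _)
    · exact absurd hab (hgv _)
    · have := hginj hab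
      have := congrArg Fin.val this
      exact Fin.ext (by simp at this; omega)
  · intro a b hab
    rw [starG, SimpleGraph.fromRel_adj] at hab
    obtain ⟨hne, h0 | h0⟩ := hab
    · have hb : b.val ≠ 0 := fun hb => hne (by subst h0; exact Fin.ext (by simp [hb]))
      simp only [h0, hb, dite_false]
      simp only [show (0 : Fin (n+1)).val = 0 from rfl, dite_true]
      exact (G.mem_neighborFinset v _).mp (hgmem _)
    · have ha : a.val ≠ 0 := fun ha => hne (by subst h0; exact Fin.ext (by simp [ha]))
      simp only [h0, ha, dite_false]
      simp only [show (0 : Fin (n+1)).val = 0 from rfl, dite_true]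
      exact ((G.mem_neighborFinset v _).mp (hgmem _)).symm

lemma contains_starPlusE_of_s17 {V : Type*} [Fintype V] [DecidableEq V]
    (G : SimpleGraph V) [DecidableRel G.Adj] (v x y : V) (m : ℕ) (hm : 3 ≤ m)
    (hx : G.Adj v x) (hy : G.Adj v y) (hxy : G.Adj x y)
    (h : m ≤ G.degree v) : Contains G (starPlusE m) := by
  set s := G.neighborFinset v \ {x, y} with hs
  have hcard : m - 2 ≤ s.card := by
    have h1 : (G.neighborFinset v).card - ({x, y} : Finset V).card ≤ s.card :=
      Finset.le_card_sdiff _ _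
    have h2 : ({x, y} : Finset V).card ≤ 2 := Finset.card_insert_le _ _ |>.trans (by simp)
    have h3 : m ≤ (G.neighborFinset v).card := h
    omega
  set g : Fin (m - 2) → V := fun i => ((s.equivFin.symm (Fin.castLE hcard i)) : V) with hg
  have hgmem : ∀ i, g i ∈ s := fun i => (s.equivFin.symm (Fin.castLE hcard i)).2
  have hginj : Function.Injective g := by
    intro i j hij
    have h2 := s.equivFin.symm.injective (Subtype.ext hij)
    exact Fin.ext (by simpa using congrArg Fin.val h2)
  have hgx : ∀ i, g i ≠ x := by
    intro i hgi
    have := hgmem i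
    rw [hs, Finset.mem_sdiff] at this
    exact this.2 (by simp [hgi])
  have hgy : ∀ i, g i ≠ y := by
    intro i hgi
    have := hgmem i
    rw [hs, Finset.mem_sdiff] at this
    exact this.2 (by simp [hgi])
  have hgadj : ∀ i, G.Adj v (g i) := by
    intro i
    have := hgmem i
    rw [hs, Finset.mem_sdiff] at this
    exact (G.mem_neighborFinset v _).mp this.1
  have hvx : v ≠ x := hx.ne
  have hvy : v ≠ y := hy.ne
  have hxyne : x ≠ y := hxy.ne
  set f : Fin (m + 1) → V := fun i =>
    if i.val = 0 then v else if i.val = 1 then x else if h2 : i.val = 2 then y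
    else g ⟨i.val - 3, by omega⟩ with hf
  have hfadj : ∀ b : Fin (m + 1), b.val ≠ 0 → G.Adj v (f b) := by
    intro b hb
    simp only [hf]
    split_ifs with h0 h1 h2
    · exact absurd h0 hb
    · exact hx
    · exact hy
    · exact hgadj _
  refine ⟨f, ?_, ?_⟩
  · intro a b hab
    simp only [hf] at hab
    split_ifs at hab with h1 h2 h3 h4 h5 h6 h7 h8 h9 h10 h11 h12 h13 h14 h15 <;>
      first
        | (exact Fin.ext (by omega))
        | (exact absurd hab hvx) | (exact absurd hab.symm hvx)
        | (exact absurd hab hvy) | (exact absurd hab.symm hvy)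
        | (exact absurd hab hxyne) | (exact absurd hab.symm hxyne)
        | (exact absurd hab.symm (hgadj _).ne) | (exact absurd hab (hgadj _).ne)
        | (exact absurd hab (hgadj _).ne.symm) | (exact absurd hab.symm (hgadj _).ne.symm)
        | (exact absurd hab.symm (hgx _)) | (exact absurd hab (hgx _))
        | (exact absurd hab.symm (hgy _)) | (exact absurd hab (hgy _))
        | (exact Fin.ext (by have := congrArg Fin.val (hginj hab); simp at this; omega))
  · intro a b hab
    rw [starPlusE, SimpleGraph.fromRel_adj] at hab
    have hf0 : f 0 = v := by simp [hf]
    have hv1 : ((1 : Fin (m+1)) : ℕ) = 1 := by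
      have e : ((1 : Fin (m+1)) : ℕ) = 1 % (m + 1) := rfl
      rw [e]; exact Nat.mod_eq_of_lt (by omega)
    have hv2 : ((2 : Fin (m+1)) : ℕ) = 2 := by
      have e : ((2 : Fin (m+1)) : ℕ) = 2 % (m + 1) := rfl
      rw [e]; exact Nat.mod_eq_of_lt (by omega)
    have hf1 : f 1 = x := by
      simp only [hf, hv1]
      norm_num
    have hf2 : f 2 = y := by
      simp only [hf, hv2]
      norm_num
    obtain ⟨hne, h0 | h0⟩ := hab
    · rcases h0 with rfl | ⟨rfl, rfl⟩
      · have hb : b.val ≠ 0 := fun hb => hne (Fin.ext (by simpa using hb.symm))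
        rw [hf0]; exact hfadj b hb
      · rw [hf1, hf2]; exact hxy
    · rcases h0 with rfl | ⟨rfl, rfl⟩
      · have ha : a.val ≠ 0 := fun ha => hne (Fin.ext (by simpa using ha))
        rw [hf0]; exact (hfadj a ha).symm
      · rw [hf1, hf2]; exact hxy.symm

theorem stmt_17 (n m : ℕ) (hn : 3 ≤ n) (hm : 3 ≤ m) (hmn : m ≤ n + 1)
    (R : SimpleGraph (Fin (2 * n)))
    (hred : ¬ Contains R (starG n)) (hblue : ¬ Contains Rᶜ (starPlusE m)) :
    ∀ v : Fin (2 * n),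
      (R.neighborSet v).ncard = n - 1 ∧ (Rᶜ.neighborSet v).ncard = n := by
  classical
  intro v
  -- red degree bound
  have hredd : ∀ w : Fin (2 * n), R.degree w ≤ n - 1 := by
    intro w
    by_contra hc
    push_neg at hc
    exact hred (contains_star_of_degree R w n (by omega))
  -- blue degree bound
  have hblued : Rᶜ.degree v ≤ n := by
    by_contra hc
    push_neg at hc
    set B := Rᶜ.neighborFinset v with hB
    have hBcard : n + 1 ≤ B.card := hc
    by_cases hpair : ∃ x ∈ B, ∃ y ∈ B, Rᶜ.Adj x y
    · obtain ⟨x, hxB, y, hyB, hxy⟩ := hpair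
      exact hblue (contains_starPlusE_of_s17 Rᶜ v x y m hm
        ((Rᶜ.mem_neighborFinset v x).mp hxB) ((Rᶜ.mem_neighborFinset v y).mp hyB)
        hxy (by omega))
    · push_neg at hpair
      -- B is a red clique; pick u ∈ B
      have hBne : B.Nonempty := Finset.card_pos.mp (by omega)
      obtain ⟨u, huB⟩ := hBne
      have hsub : B \ {u} ⊆ R.neighborFinset u := by
        intro w hw
        rw [Finset.mem_sdiff, Finset.mem_singleton] at hw
        obtain ⟨hwB, hwu⟩ := hw
        rw [SimpleGraph.mem_neighborFinset]
        have hnotblue := hpair u huB w hwB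
        rw [SimpleGraph.compl_adj] at hnotblue
        push_neg at hnotblue
        exact hnotblue (fun h => hwu h.symm)
      have : n ≤ (B \ {u}).card := by
        have h2 := Finset.le_card_sdiff {u} B
        simp only [Finset.card_singleton] at h2
        omega
      have hdeg : n ≤ R.degree u := le_trans this (Finset.card_le_card hsub)
      exact hred (contains_star_of_degree R u n hdeg)
  -- degree sum
  have hcompl : Rᶜ.degree v = Fintype.card (Fin (2 * n)) - 1 - R.degree v :=
    SimpleGraph.degree_compl R v
  have hcardV : Fintype.card (Fin (2 * n)) = 2 * n := Fintype.card_fin _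
  have hlt := R.degree_lt_card_verts v
  rw [hcardV] at hlt
  have hrv := hredd v
  have hrd : R.degree v = n - 1 ∧ Rᶜ.degree v = n := by omega
  have e1 : (R.neighborSet v).ncard = R.degree v := by
    rw [Set.ncard_eq_toFinset_card', Set.toFinset_card]
    exact SimpleGraph.card_neighborSet_eq_degree R v
  have e2 : (Rᶜ.neighborSet v).ncard = Rᶜ.degree v := by
    rw [Set.ncard_eq_toFinset_card', Set.toFinset_card]
    exact SimpleGraph.card_neighborSet_eq_degree Rᶜ v
  exact ⟨by rw [e1, hrd.1], by rw [e2, hrd.2]⟩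
end
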